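/- For every parameter tuple (h,j,k,0) with k ∈ {0,…,q_0−1}, j ∈ {0,…,q_0−1}, and max{1, m_{j,k,0}} ≤ h ≤ 2q_0, the integer n_{h,j,k,0} = hq − 2kq_0 − j belongs to the additive submonoid of ℕ generated by G_1. -/

import Mathlib

/-- `q₀ = 2^s`. -/
def q0 (s : ℕ) : ℕ := 2 ^ s

/-- `q = 2 q₀²`. -/
def qS (s : ℕ) : ℕ := 2 * q0 s ^ 2

/-- `m_{j,k,ℓ} = ⌈(q₀/(q₀−1))·(j + k + ℓ − (k+ℓ)/q)⌉`. -/
def mval (s j k l : ℕ) : ℤ :=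
  ⌈((q0 s : ℚ) / ((q0 s : ℚ) - 1)) *
    ((j : ℚ) + (k : ℚ) + (l : ℚ) - ((k : ℚ) + (l : ℚ)) / (qS s : ℚ))⌉

/-- `F₁ = { hq − (ℓ+2k)q₀ − j : ℓ ∈ {0,1}, k,j ∈ {0,…,q₀−1},
    h ∈ {max{1, m_{j,k,ℓ}},…,2q₀} }`. -/
def F1 (s : ℕ) : Set ℕ :=
  {n | ∃ h j k l : ℕ, l ≤ 1 ∧ k < q0 s ∧ j < q0 s ∧
    max 1 (mval s j k l) ≤ (h : ℤ) ∧ h ≤ 2 * q0 s ∧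
    n = h * qS s - (l + 2 * k) * q0 s - j}

/-- `F₂ = { hq − (2h−2q₀−1)q₀ − (q₀−1) : h ∈ {q₀+1,…,2q₀} }`. -/
def F2 (s : ℕ) : Set ℕ :=
  {n | ∃ h : ℕ, q0 s + 1 ≤ h ∧ h ≤ 2 * q0 s ∧
    n = h * qS s - (2 * h - 2 * q0 s - 1) * q0 s - (q0 s - 1)}

/-- `G₁ = { hq − kq₀ − ⌊(2h−k−2)/2⌋ : h ∈ {1,…,q₀}, k ∈ {0,…,2h−2} }`. -/
def G1 (s : ℕ) : Set ℕ :=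
  {n | ∃ h k : ℕ, 1 ≤ h ∧ h ≤ q0 s ∧ k ≤ 2 * h - 2 ∧
    n = h * qS s - k * q0 s - (2 * h - k - 2) / 2}

/-!
Write `n(h, j, k) = h q - 2 k q₀ - j`, the paper's `n_{h,j,k,0}`. The elements of `G₁` with even
second index are exactly the `n(h, h - k - 1, k)` with `k < h ≤ q₀`, and `n` is additive in
`(h, j, k)` as long as no truncated subtraction occurs. Hence a sum of `t` such generators is an
`n(h, j, k)` with `h = j + k + t`, and conversely every such `n(h, j, k)` with `h ≤ t q₀` is a sum of
`t` generators: split `h` into `t` parts of size at most `q₀`. The bound `h ≥ m_{j,k,0}` amounts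
to `q₀ (j + k) + h ≤ h q₀`, i.e. `h ≤ t q₀` for `t = h - j - k`.
-/

def nval (s h j k : ℕ) : ℕ := h * qS s - 2 * k * q0 s - j

lemma two_le_q0 {s : ℕ} (hs : 1 ≤ s) : 2 ≤ q0 s :=
  Nat.le_self_pow (by omega) 2

lemma two_mul_mul_q0_add_le {s h j k : ℕ} (hkj : k + j ≤ h) : 2 * k * q0 s + j ≤ h * qS s := by
  have hQ : 1 ≤ q0 s := Nat.one_le_two_pow
  calc 2 * k * q0 s + j ≤ 2 * (k + j) * q0 s := by nlinarith
    _ ≤ 2 * h * q0 s := by gcongr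
    _ ≤ 2 * h * q0 s * q0 s := Nat.le_mul_of_pos_right _ hQ
    _ = h * qS s := by unfold qS; ring

lemma nval_add {s h₁ j₁ k₁ h₂ j₂ k₂ : ℕ} (hle₁ : k₁ + j₁ ≤ h₁) (hle₂ : k₂ + j₂ ≤ h₂) :
    nval s (h₁ + h₂) (j₁ + j₂) (k₁ + k₂) = nval s h₁ j₁ k₁ + nval s h₂ j₂ k₂ := by
  have b₁ := two_mul_mul_q0_add_le (s := s) hle₁
  have b₂ := two_mul_mul_q0_add_le (s := s) hle₂
  have e : 2 * (k₁ + k₂) * q0 s = 2 * k₁ * q0 s + 2 * k₂ * q0 s := by ring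
  unfold nval
  rw [add_mul, e]
  omega

lemma nval_mem_G1 {s h j k : ℕ} (hsum : h = k + j + 1) (hq : h ≤ q0 s) : nval s h j k ∈ G1 s :=
  ⟨h, 2 * k, by omega, hq, by omega, by rw [show (2 * h - 2 * k - 2) / 2 = j by omega]; rfl⟩

lemma nval_mem_closure_G1 {s t : ℕ} (ht : 1 ≤ t) :
    ∀ {h j k : ℕ}, h = k + j + t → h ≤ t * q0 s → nval s h j k ∈ AddSubmonoid.closure (G1 s) := by
  induction t, ht using Nat.le_induction with
  | base =>
    intro h j k hsum hq
    exact AddSubmonoid.subset_closure (nval_mem_G1 hsum (by simpa using hq))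
  | succ t ht ih =>
    intro h j k hsum hq
    have hQ : 1 ≤ q0 s := Nat.one_le_two_pow
    have htQ : t ≤ t * q0 s := Nat.le_mul_of_pos_right t hQ
    have hsucc : (t + 1) * q0 s = t * q0 s + q0 s := by ring
    -- peel off one generator of height `h₁`, as large as the remaining `t` parts allow
    set h₁ := min (q0 s) (h - t)
    set a := min (h₁ - 1) k
    set j₁ := h₁ - a - 1
    have split : nval s h j k = nval s h₁ j₁ a + nval s (h - h₁) (j - j₁) (k - a) := by
      rw [← nval_add (by omega) (by omega)]
      congr 1 <;> omega
    rw [split]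
    exact add_mem (AddSubmonoid.subset_closure (nval_mem_G1 (by omega) (by omega)))
      (ih (by omega) (by omega))

lemma q0_mul_add_le_of_mval_le {s h j k : ℕ} (hs : 1 ≤ s) (hk : k < 2 * q0 s)
    (hm : mval s j k 0 ≤ h) : q0 s * (j + k) + h ≤ h * q0 s := by
  have hQ : (2 : ℚ) ≤ q0 s := by exact_mod_cast two_le_q0 hs
  have hq : (qS s : ℚ) = 2 * (q0 s : ℚ) ^ 2 := by simp [qS]
  have hkQ : (k : ℚ) < 2 * q0 s := by exact_mod_cast hk
  rw [mval, Int.ceil_le, hq] at hm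
  push_cast at hm
  simp only [add_zero] at hm
  rw [div_mul_eq_mul_div, div_le_iff₀ (by linarith)] at hm
  have hkq : (q0 s : ℚ) * (k / (2 * q0 s ^ 2)) < 1 := by
    rw [mul_div_assoc', div_lt_one (by positivity)]
    nlinarith
  have : (q0 s * (j + k) + h : ℚ) < h * q0 s + 1 := by linarith
  exact Nat.lt_succ_iff.mp (by exact_mod_cast this)

theorem stmt10_general (s : ℕ) (hs : 1 ≤ s) (h j k : ℕ)
    (hk : k < q0 s)
    (hhm : max 1 (mval s j k 0) ≤ (h : ℤ)) :
    h * qS s - 2 * k * q0 s - j ∈ AddSubmonoid.closure (G1 s) := by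
  have hh1 : 1 ≤ h := by exact_mod_cast (le_max_left _ _).trans hhm
  have hle := q0_mul_add_le_of_mval_le hs (by omega) ((le_max_right _ _).trans hhm)
  have ht : h ≤ (h - (j + k)) * q0 s := by
    rw [Nat.sub_mul, Nat.mul_comm (j + k)]
    omega
  have ht1 : 1 ≤ h - (j + k) := Nat.pos_of_ne_zero fun h0 => by rw [h0, zero_mul] at ht; omega
  exact nval_mem_closure_G1 ht1 (by omega) ht

/-- Every `n_{h,j,k,0} = hq − 2kq₀ − j ∈ F₁` belongs to `⟨G₁⟩`. -/
theorem stmt10 (s : ℕ) (hs : 1 ≤ s) (h j k : ℕ)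
    (hk : k < q0 s) (hj : j < q0 s)
    (hhm : max 1 (mval s j k 0) ≤ (h : ℤ)) (hh : h ≤ 2 * q0 s) :
    h * qS s - 2 * k * q0 s - j ∈ AddSubmonoid.closure (G1 s) :=
  stmt10_general s hs h j k hk hhm
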